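/- For n ≥ 2, the set of prefixes of length f_{2n} − 1 of words in A_n is a proper subset of the set of prefixes of length f_{2n} − 1 of words in A_{n+1}; that is, A_n[1, f_{2n}−1] ⊊ A_{n+1}[1, f_{2n}−1]. -/
import Mathlib


/-- The two-letter alphabet. -/
inductive Letter : Type
  | a : Letter
  | b : Letter
deriving DecidableEq

/-- A word is a finite sequence of letters. -/
abbrev Word := List Letter

/-- Concatenation set `UV = {uv : u ∈ U, v ∈ V}`. -/
def concatSet (U V : Set Word) : Set Word := {w | ∃ u ∈ U, ∃ v ∈ V, w = u ++ v}

mutual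
  /-- The sets `A_n` of inflated words (indexed so that `Aset 1 = {a}`). -/
  def Aset : ℕ → Set Word
    | 0 => ∅
    | 1 => {[Letter.a]}
    | n + 2 => concatSet (Bset (n + 1)) (concatSet (Aset (n + 1)) (Aset (n + 1)))
  /-- The sets `B_n` of inflated words (indexed so that `Bset 1 = {b}`). -/
  def Bset : ℕ → Set Word
    | 0 => ∅
    | 1 => {[Letter.b]}
    | n + 2 => concatSet (Aset (n + 1)) (Bset (n + 1)) ∪ concatSet (Bset (n + 1)) (Aset (n + 1))
end

/-- The sub-word `w[a,b] = w_a w_{a+1} … w_b` (1-indexed). -/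
def wordSlice (w : Word) (i j : ℕ) : Word := (w.drop (i - 1)).take (j - i + 1)

/-- `W[a,b] = {w[a,b] : w ∈ W}`. -/
def setSlice (W : Set Word) (i j : ℕ) : Set Word := {x | ∃ w ∈ W, x = wordSlice w i j}

/-- `x` is a sub-word (contiguous factor) of `w`. -/
def IsFactor (x w : Word) : Prop := ∃ u v : Word, w = u ++ x ++ v

/-- `F(S, m)`: the set of all sub-words of length `m` of words in `S`. -/
def FactorSet (S : Set Word) (m : ℕ) : Set Word :=
  {x | x.length = m ∧ ∃ w ∈ S, IsFactor x w}

/-- `F(A, m) = ⋃_{n ≥ 1} F(A_n, m)`. -/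
def FA (m : ℕ) : Set Word := ⋃ n ∈ {n : ℕ | 1 ≤ n}, FactorSet (Aset n) m

/-- `F(B, m) = ⋃_{n ≥ 1} F(B_n, m)`. -/
def FB (m : ℕ) : Set Word := ⋃ n ∈ {n : ℕ | 1 ≤ n}, FactorSet (Bset n) m

/-- The golden mean `τ = (1 + √5)/2`. -/
noncomputable def tau : ℝ := (1 + Real.sqrt 5) / 2
section Aux

lemma fib_rec (a b c : ℕ) (h : b + 2 = a) (h2 : b + 1 = c) :
    Nat.fib a = Nat.fib b + Nat.fib c := by subst h h2; exact Nat.fib_add_two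

lemma takeApp (x y : Word) (k : ℕ) (hk : x.length ≤ k) :
    (x ++ y).take k = x ++ y.take (k - x.length) := by
  rw [List.take_append, List.take_of_length_le hk]

lemma lenAB : ∀ n : ℕ,
    (∀ w ∈ Aset (n + 1), w.length = Nat.fib (2 * n + 2)) ∧
    (∀ w ∈ Bset (n + 1), w.length = Nat.fib (2 * n + 1)) := by
  intro n
  induction n with
  | zero =>
    constructor
    · intro w hw; have : w = [Letter.a] := hw; subst this; decide
    · intro w hw; have : w = [Letter.b] := hw; subst this; decide
  | succ n ih =>
    obtain ⟨ihA, ihB⟩ := ih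
    have hf1 : Nat.fib (2 * n + 4) = Nat.fib (2 * n + 2) + Nat.fib (2 * n + 3) :=
      fib_rec _ _ _ (by omega) (by omega)
    have hf2 : Nat.fib (2 * n + 3) = Nat.fib (2 * n + 1) + Nat.fib (2 * n + 2) :=
      fib_rec _ _ _ (by omega) (by omega)
    constructor
    · rintro w ⟨u, hu, v, ⟨v1, h1, v2, h2, rfl⟩, rfl⟩
      have lu := ihB u hu
      have l1 := ihA v1 h1
      have l2 := ihA v2 h2
      have : 2 * (n + 1) + 2 = 2 * n + 4 := by ring
      rw [this]
      simp only [List.length_append, lu, l1, l2]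
      omega
    · intro w hw
      have : 2 * (n + 1) + 1 = 2 * n + 3 := by ring
      rw [this]
      rcases hw with ⟨u, hu, v, hv, rfl⟩ | ⟨u, hu, v, hv, rfl⟩
      · have lu := ihA u hu
        have lv := ihB v hv
        simp only [List.length_append, lu, lv]; omega
      · have lu := ihB u hu
        have lv := ihA v hv
        simp only [List.length_append, lu, lv]; omega

lemma exAB : ∀ n : ℕ,
    (∃ w, w ∈ Aset (n + 1)) ∧ (∃ w c, w ∈ Bset (n + 1) ∧ w = c ++ [Letter.b]) := by
  intro n
  induction n with
  | zero =>
    exact ⟨⟨[Letter.a], rfl⟩, ⟨[Letter.b], [], rfl, rfl⟩⟩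
  | succ n ih =>
    obtain ⟨⟨wa, hwa⟩, ⟨wb, c, hwb, hcb⟩⟩ := ih
    refine ⟨⟨wb ++ (wa ++ wa), ⟨wb, hwb, wa ++ wa, ⟨wa, hwa, wa, hwa, rfl⟩, rfl⟩⟩,
      ⟨wa ++ wb, wa ++ c, Or.inl ⟨wa, hwa, wb, hwb, rfl⟩, ?_⟩⟩
    rw [hcb, List.append_assoc]

lemma endA : ∀ n : ℕ, ∀ w ∈ Aset (n + 1), ∃ c, w = c ++ [Letter.a] := by
  intro n
  induction n with
  | zero => intro w hw; have : w = [Letter.a] := hw; exact ⟨[], this⟩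
  | succ n ih =>
    rintro w ⟨u, hu, v, ⟨v1, h1, v2, h2, rfl⟩, rfl⟩
    obtain ⟨c, rfl⟩ := ih v2 h2
    exact ⟨u ++ (v1 ++ c), by simp [List.append_assoc]⟩

/-- The key subset lemma. -/
lemma keySubset : ∀ n : ℕ, 2 ≤ n → ∀ w ∈ Aset n,
    ∃ w' ∈ Aset (n + 1),
      w'.take (Nat.fib (2 * n) - 1) = w.take (Nat.fib (2 * n) - 1) := by
  intro n hn
  induction n, hn using Nat.le_induction with
  | base =>
    intro w hw
    obtain ⟨u, hu, v, ⟨v1, h1, v2, h2, rfl⟩, rfl⟩ := hw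
    have hu' : u = [Letter.b] := hu
    have h1' : v1 = [Letter.a] := h1
    have h2' : v2 = [Letter.a] := h2
    subst hu' h1' h2'
    refine ⟨[Letter.b, Letter.a] ++ ([Letter.b, Letter.a, Letter.a] ++ [Letter.b, Letter.a, Letter.a]),
      ⟨[Letter.b, Letter.a], Or.inr ⟨[Letter.b], rfl, [Letter.a], rfl, rfl⟩,
        [Letter.b, Letter.a, Letter.a] ++ [Letter.b, Letter.a, Letter.a],
        ⟨[Letter.b, Letter.a, Letter.a], ⟨[Letter.b], rfl, [Letter.a] ++ [Letter.a], ⟨[Letter.a], rfl, [Letter.a], rfl, rfl⟩, rfl⟩,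
         [Letter.b, Letter.a, Letter.a], ⟨[Letter.b], rfl, [Letter.a] ++ [Letter.a], ⟨[Letter.a], rfl, [Letter.a], rfl, rfl⟩, rfl⟩, rfl⟩, rfl⟩, ?_⟩
    have : Nat.fib (2 * 2) - 1 = 2 := by decide
    rw [this]; rfl
  | succ n hn ih =>
    obtain ⟨m, rfl⟩ : ∃ m, n = m + 2 := ⟨n - 2, by omega⟩
    rintro w ⟨b, hb, v, ⟨u1, hu1, u2, hu2, rfl⟩, rfl⟩
    obtain ⟨u, hu, hTake⟩ := ih u2 hu2
    obtain ⟨u'', hu''⟩ := (exAB (m + 2)).1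
    -- lengths
    have hlb : b.length = Nat.fib (2 * m + 3) := by
      have := (lenAB (m + 1)).2 b hb
      rwa [show 2 * (m + 1) + 1 = 2 * m + 3 from by ring] at this
    have hlu1 : u1.length = Nat.fib (2 * m + 4) := by
      have := (lenAB (m + 1)).1 u1 hu1
      rwa [show 2 * (m + 1) + 2 = 2 * m + 4 from by ring] at this
    have hlu : u.length = Nat.fib (2 * m + 6) := by
      have := (lenAB (m + 2)).1 u hu
      rwa [show 2 * (m + 2) + 2 = 2 * m + 6 from by ring] at this
    have hf3 : 0 < Nat.fib (2 * m + 3) := Nat.fib_pos.mpr (by omega)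
    have hf4' : 0 < Nat.fib (2 * m + 4) := Nat.fib_pos.mpr (by omega)
    have hf5 : Nat.fib (2 * m + 5) = Nat.fib (2 * m + 3) + Nat.fib (2 * m + 4) :=
      fib_rec _ _ _ (by omega) (by omega)
    have hf6 : Nat.fib (2 * m + 6) = Nat.fib (2 * m + 4) + Nat.fib (2 * m + 5) :=
      fib_rec _ _ _ (by omega) (by omega)
    rw [show 2 * (m + 2 + 1) = 2 * m + 6 from by ring]
    rw [show 2 * (m + 2) = 2 * m + 4 from by ring] at hTake
    refine ⟨(b ++ u1) ++ (u ++ u''),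
      ⟨b ++ u1, Or.inr ⟨b, hb, u1, hu1, rfl⟩, u ++ u'', ⟨u, hu, u'', hu'', rfl⟩, rfl⟩, ?_⟩
    -- compute LHS
    rw [takeApp (b ++ u1) (u ++ u'') _ (by simp [hlb, hlu1]; omega)]
    rw [show Nat.fib (2 * m + 6) - 1 - (b ++ u1).length = Nat.fib (2 * m + 4) - 1 from by
      simp [hlb, hlu1]; omega]
    rw [List.take_append_of_le_length (l₁ := u) (by rw [hlu]; omega)]
    -- compute RHS
    rw [takeApp b (u1 ++ u2) _ (by rw [hlb]; omega)]
    rw [takeApp u1 u2 _ (by rw [hlu1, hlb]; omega)]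
    rw [show Nat.fib (2 * m + 6) - 1 - b.length - u1.length = Nat.fib (2 * m + 4) - 1 from by
      rw [hlb, hlu1]; omega]
    rw [hTake, List.append_assoc]

lemma wordSlice_one (w : Word) (j : ℕ) (hj : 1 ≤ j) : wordSlice w 1 j = w.take j := by
  unfold wordSlice
  simp only [Nat.sub_self, List.drop_zero]
  rw [show j - 1 + 1 = j from by omega]

end Aux

theorem prefix_Aset_ssubset_succ (n : ℕ) (hn : 2 ≤ n) :
    setSlice (Aset n) 1 (Nat.fib (2 * n) - 1) ⊂
      setSlice (Aset (n + 1)) 1 (Nat.fib (2 * n) - 1) := by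
  obtain ⟨m, rfl⟩ : ∃ m, n = m + 2 := ⟨n - 2, by omega⟩
  -- fib facts
  have hf1 : 0 < Nat.fib (2 * m + 1) := Nat.fib_pos.mpr (by omega)
  have hf2 : 0 < Nat.fib (2 * m + 2) := Nat.fib_pos.mpr (by omega)
  have hf3r : Nat.fib (2 * m + 3) = Nat.fib (2 * m + 1) + Nat.fib (2 * m + 2) :=
    fib_rec _ _ _ (by omega) (by omega)
  have hf4r : Nat.fib (2 * m + 4) = Nat.fib (2 * m + 2) + Nat.fib (2 * m + 3) :=
    fib_rec _ _ _ (by omega) (by omega)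
  have hN : 2 * (m + 2) = 2 * m + 4 := by ring
  rw [hN]
  set N := Nat.fib (2 * m + 4) - 1 with hNdef
  have hN1 : 1 ≤ N := by omega
  have hsub : setSlice (Aset (m + 2)) 1 N ⊆ setSlice (Aset (m + 2 + 1)) 1 N := by
    rintro x ⟨w, hw, rfl⟩
    obtain ⟨w', hw', htake⟩ := keySubset (m + 2) (by omega) w hw
    rw [show 2 * (m + 2) = 2 * m + 4 from by ring] at htake
    exact ⟨w', hw', by rw [wordSlice_one _ _ hN1, wordSlice_one _ _ hN1, htake]⟩
  rw [Set.ssubset_iff_of_subset hsub]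
  -- the witness
  obtain ⟨⟨wa, hwa⟩, ⟨wb, c, hwb, hcb⟩⟩ := exAB (m + 1)
  have hlwb : wb.length = Nat.fib (2 * m + 3) := by
    have := (lenAB (m + 1)).2 wb hwb
    rwa [show 2 * (m + 1) + 1 = 2 * m + 3 from by ring] at this
  have hlc : c.length = Nat.fib (2 * m + 3) - 1 := by
    have := hlwb
    rw [hcb] at this; simp at this; omega
  refine ⟨wordSlice (wb ++ (wa ++ wa)) 1 N,
    ⟨wb ++ (wa ++ wa), ⟨wb, hwb, wa ++ wa, ⟨wa, hwa, wa, hwa, rfl⟩, rfl⟩, rfl⟩, ?_⟩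
  rintro ⟨w, hw, hpw⟩
  rw [wordSlice_one _ _ hN1] at hpw
  -- the letter at (0-based) position fib(2m+3) - 1 differs
  set i := Nat.fib (2 * m + 3) - 1 with hidef
  have hiN : i < N := by omega
  -- value in the witness word
  have hwit : ((wb ++ (wa ++ wa)).take N)[i]? = some Letter.b := by
    rw [List.getElem?_take, if_pos hiN, hcb, List.append_assoc,
      List.getElem?_append_right (by omega), hlc]
    simp
  -- value in a word of A_{m+2}
  obtain ⟨b', hb', v, ⟨u1, hu1, u2, hu2, rfl⟩, rfl⟩ := hw
  obtain ⟨d, rfl⟩ := endA m u1 hu1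
  have hlb' : b'.length = Nat.fib (2 * m + 1) := by
    have := (lenAB m).2 b' hb'
    rwa [show 2 * m + 1 = 2 * m + 1 from rfl] at this
  have hld : d.length = Nat.fib (2 * m + 2) - 1 := by
    have := (lenAB m).1 (d ++ [Letter.a]) hu1
    simp at this; omega
  have hw2 : (b' ++ (d ++ [Letter.a] ++ u2)).take N = (b' ++ d) ++ ([Letter.a] ++ u2.take (N - (b' ++ d).length - 1)) := by
    rw [show b' ++ (d ++ [Letter.a] ++ u2) = (b' ++ d) ++ ([Letter.a] ++ u2) from by
      simp [List.append_assoc]]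
    rw [takeApp (b' ++ d) ([Letter.a] ++ u2) _ (by simp [hlb', hld]; omega)]
    rw [takeApp [Letter.a] u2 _ (by simp [hlb', hld]; omega)]
    simp
  have hwit2 : ((b' ++ (d ++ [Letter.a] ++ u2)).take N)[i]? = some Letter.a := by
    rw [hw2, List.getElem?_append_right (by simp [hlb', hld]; omega)]
    rw [show i - (b' ++ d).length = 0 from by simp [hlb', hld]; omega]
    simp
  simp only [wordSlice_one _ _ hN1] at hpw
  rw [hpw, hwit2] at hwit
  exact Letter.noConfusion (Option.some.inj hwit)
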